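/- Let (V,σ) be a symplectic vector space and Z ⊂ V* a subspace of its algebraic dual. Define a Z-action γ : Z → Aut(Weyl(V,σ)) by γ(z)(W(v)) = e^{i z(v)} W(v) for v ∈ V. Then the fixed-point subalgebra Weyl(V,σ)^γ = {a ∈ Weyl(V,σ) : γ(z)a = a for all z ∈ Z} is the C*-subalgebra generated by {W(v) : v ∈ ⋂_{z∈Z} ker z}. -/

import Mathlib

/-!
# Statement 13

Let `(V,σ)` be a symplectic vector space and `Z ⊂ V*` a subspace of its
algebraic dual.  Define a `Z`-action `γ : Z → Aut(Weyl(V,σ))` by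
`γ(z)(W(v)) = e^{i z(v)} W(v)` for `v ∈ V`.  Then the fixed-point subalgebra
`Weyl(V,σ)^γ = {a ∈ Weyl(V,σ) : γ(z)a = a for all z ∈ Z}` is the
C*-subalgebra generated by `{W(v) : v ∈ ⋂_{z∈Z} ker z}`.

The Weyl C*-algebra `Weyl(V,σ)` is modelled as a C*-algebra together with a
generating family `W : V → A` satisfying the Weyl relations; for symplectic
(nondegenerate) `σ` this determines the algebra uniquely.  The C*-subalgebra
generated by a set is the topological closure of the `*`-subalgebra it
generates (which, by the relation `W(v)* = W(−v)`, is the closure of the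
`ℂ`-subalgebra `Algebra.adjoin` of the set).
-/

noncomputable section

/-- A realisation of the Weyl C*-algebra `Weyl(V,σ)` of a pre-symplectic real
vector space `(V,σ)`: a unital C*-algebra with generators `W v`, `v ∈ V`,
satisfying the Weyl relations `W(0) = 1`, `W(v)* = W(−v)`,
`W(v)W(w) = e^{−iσ(v,w)/2} W(v+w)`, and generating a dense `*`-subalgebra. -/
structure WeylSystem (V : Type) [AddCommGroup V] [Module ℝ V]
    (σ : V →ₗ[ℝ] V →ₗ[ℝ] ℝ) where
  /-- the underlying C*-algebra. -/
  Alg : Type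
  [algCStar : CStarAlgebra Alg]
  /-- the Weyl generators. -/
  W : V → Alg
  W_zero : W 0 = 1
  W_star : ∀ v, star (W v) = W (-v)
  W_mul : ∀ v w, W v * W w = Complex.exp (-(Complex.I * (σ v w : ℝ)) / 2) • W (v + w)
  generates : (Algebra.adjoin ℂ (Set.range W)).topologicalClosure = ⊤

attribute [instance] WeylSystem.algCStar

/-! For `z ∈ Z` the averaging map `½(1 + γ z)` is a contraction fixing every `γ`-fixed point,
and it scales `W v` by `½(1 + e^{i z(v)})`, which vanishes when `z(v) = π`. An element of the
dense span of the `W v` involves finitely many `v`; for each such `v` outside `⋂ ker z`, a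
rescaled `z ∈ Z` takes the value `π` at `v`, and composing the corresponding averaging maps
sends the element into the span of the `W v` with `v ∈ ⋂ ker z`, without moving it farther
from a given fixed point. Conversely, the fixed points of each `γ z` form a closed
subalgebra containing those generators. -/

open Complex Submodule

theorem mem_closure_of_forall_lipschitzWith_one_fixing {X : Type*} [PseudoMetricSpace X]
    {s t : Set X} {a : X} (ha : a ∈ closure s)
    (h : ∀ b ∈ s, ∃ P : X → X, LipschitzWith 1 P ∧ P a = a ∧ P b ∈ t) :
    a ∈ closure t := by
  rw [Metric.mem_closure_iff] at ha ⊢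
  intro ε hε
  obtain ⟨b, hb, hab⟩ := ha ε hε
  obtain ⟨P, hP, hPa, hPb⟩ := h b hb
  refine ⟨P b, hPb, ?_⟩
  calc dist a (P b) = dist (P a) (P b) := by rw [hPa]
    _ ≤ dist a b := by simpa using hP.dist_le_mul a b
    _ < ε := hab

theorem Submodule.exists_mem_dual_apply_eq {K M : Type*} [Field K] [AddCommGroup M] [Module K M]
    (Z : Submodule K (Module.Dual K M)) {v : M} (hv : ∃ z ∈ Z, z v ≠ 0) (t : K) :
    ∃ ζ ∈ Z, ζ v = t := by
  obtain ⟨z, hz, hzv⟩ := hv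
  exact ⟨(t / z v) • z, Z.smul_mem _ hz, by simp [hzv]⟩

namespace List

variable {ι R M : Type*} [CommSemiring R] [AddCommMonoid M] [Module R M]

theorem prod_map_apply_of_forall_eq_smul (f : ι → Module.End R M) (c : ι → R) {x : M}
    {L : List ι} (h : ∀ i ∈ L, f i x = c i • x) : (L.map f).prod x = (L.map c).prod • x := by
  induction L with
  | nil => simp
  | cons i L ih =>
    rw [map_cons, prod_cons, Module.End.mul_apply, ih fun j hj => h j (mem_cons_of_mem i hj),
      map_smul, h i mem_cons_self, smul_smul, map_cons, prod_cons, mul_comm]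

theorem prod_map_apply_of_forall_eq_self (f : ι → Module.End R M) {x : M} {L : List ι}
    (h : ∀ i ∈ L, f i x = x) : (L.map f).prod x = x := by
  simpa using prod_map_apply_of_forall_eq_smul f (fun _ => (1 : R)) (L := L) (by simpa using h)

theorem lipschitzWith_one_prod_map [PseudoMetricSpace M] (f : ι → Module.End R M) {L : List ι}
    (h : ∀ i ∈ L, LipschitzWith 1 (f i)) : LipschitzWith 1 ((L.map f).prod) := by
  induction L with
  | nil => exact LipschitzWith.id
  | cons i L ih =>
    rw [map_cons, prod_cons, Module.End.coe_mul]
    simpa using (h i mem_cons_self).comp (ih fun j hj => h j (mem_cons_of_mem i hj))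

end List

namespace StarAlgEquiv

variable {A : Type*} [CStarAlgebra A]

def average (g : A ≃⋆ₐ[ℂ] A) : Module.End ℂ A :=
  (2⁻¹ : ℂ) • (1 + g.toAlgEquiv.toLinearMap)

theorem average_apply (g : A ≃⋆ₐ[ℂ] A) (x : A) : g.average x = (2⁻¹ : ℂ) • (x + g x) := rfl

theorem lipschitzWith_one_average (g : A ≃⋆ₐ[ℂ] A) : LipschitzWith 1 g.average := by
  simpa using AddMonoidHomClass.lipschitz_of_bound g.average 1 fun x => by
    rw [average_apply, norm_smul, one_mul]
    calc ‖(2⁻¹ : ℂ)‖ * ‖x + g x‖ ≤ 2⁻¹ * (‖x‖ + ‖g x‖) := by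
          norm_num; exact norm_add_le _ _
      _ = ‖x‖ := by rw [norm_map]; ring

theorem average_apply_of_map_eq_smul (g : A ≃⋆ₐ[ℂ] A) {x : A} {c : ℂ} (h : g x = c • x) :
    g.average x = (2⁻¹ * (1 + c)) • x := by
  rw [average_apply, h, mul_smul, add_smul, one_smul]

theorem average_apply_of_map_eq_self (g : A ≃⋆ₐ[ℂ] A) {x : A} (h : g x = x) :
    g.average x = x := by
  rw [g.average_apply_of_map_eq_smul (c := 1) (by rw [h, one_smul])]
  norm_num

theorem map_eq_self_of_mem_topologicalClosure_adjoin (g : A ≃⋆ₐ[ℂ] A) {s : Set A}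
    (hs : ∀ x ∈ s, g x = x) {a : A} (ha : a ∈ (Algebra.adjoin ℂ s).topologicalClosure) :
    g a = a := by
  have hfix : Algebra.adjoin ℂ s ≤ AlgHom.equalizer (g : A →ₐ[ℂ] A) (AlgHom.id ℂ A) :=
    Algebra.adjoin_le hs
  exact closure_minimal hfix (isClosed_eq (isometry g).continuous continuous_id) ha

end StarAlgEquiv

namespace WeylSystem

variable {V : Type} [AddCommGroup V] [Module ℝ V] {σ : V →ₗ[ℝ] V →ₗ[ℝ] ℝ} (S : WeylSystem V σ)

theorem span_range_W_mul_le :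
    span ℂ (Set.range S.W) * span ℂ (Set.range S.W) ≤ span ℂ (Set.range S.W) := by
  rw [span_mul_span, span_le]
  rintro _ ⟨_, ⟨u, rfl⟩, _, ⟨w, rfl⟩, rfl⟩
  dsimp only
  rw [SetLike.mem_coe, S.W_mul]
  exact smul_mem _ _ (subset_span ⟨u + w, rfl⟩)

theorem adjoin_range_W_subset_span :
    (Algebra.adjoin ℂ (Set.range S.W) : Set S.Alg) ⊆ span ℂ (Set.range S.W) :=
  Algebra.adjoin_le (S := (span ℂ (Set.range S.W)).toSubalgebra
    (S.W_zero ▸ subset_span ⟨0, rfl⟩)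
    fun {_ _} hx hy => S.span_range_W_mul_le (mul_mem_mul hx hy))
    subset_span

variable (Z : Submodule ℝ (Module.Dual ℝ V)) {γ : Module.Dual ℝ V → (S.Alg ≃⋆ₐ[ℂ] S.Alg)}

theorem prod_map_average_apply_W
    (hγ : ∀ z ∈ Z, ∀ v : V, γ z (S.W v) = exp (I * (z v : ℝ)) • S.W v)
    {L : List (Module.Dual ℝ V)} (hL : ∀ z ∈ L, z ∈ Z) (v : V) :
    (L.map fun z => (γ z).average).prod (S.W v)
      = (L.map fun z => 2⁻¹ * (1 + exp (I * (z v : ℝ)))).prod • S.W v :=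
  List.prod_map_apply_of_forall_eq_smul _ _ fun z hz =>
    (γ z).average_apply_of_map_eq_smul (hγ z (hL z hz) v)

theorem exists_prod_map_average_apply_mem_span
    (hγ : ∀ z ∈ Z, ∀ v : V, γ z (S.W v) = exp (I * (z v : ℝ)) • S.W v)
    {b : S.Alg} (hb : b ∈ span ℂ (Set.range S.W)) :
    ∃ L : List (Module.Dual ℝ V), (∀ z ∈ L, z ∈ Z) ∧
      (L.map fun z => (γ z).average).prod b ∈ span ℂ (S.W '' {v : V | ∀ z ∈ Z, z v = 0}) := by
  classical
  have hζ : ∀ v : V, ∃ ζ ∈ Z, (∃ z ∈ Z, z v ≠ 0) → ζ v = Real.pi := by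
    intro v
    by_cases hv : ∃ z ∈ Z, z v ≠ 0
    · obtain ⟨ζ, hζ, hζv⟩ := Z.exists_mem_dual_apply_eq hv Real.pi
      exact ⟨ζ, hζ, fun _ => hζv⟩
    · exact ⟨0, Z.zero_mem, fun h => absurd h hv⟩
  choose ζ hζZ hζπ using hζ
  obtain ⟨c, rfl⟩ := Finsupp.mem_span_range_iff_exists_finsupp.mp hb
  have hLZ : ∀ z ∈ c.support.toList.map ζ, z ∈ Z := by simpa using fun v _ => hζZ v
  refine ⟨_, hLZ, ?_⟩
  rw [map_finsuppSum]
  refine sum_mem fun v hv => ?_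
  dsimp only
  rw [map_smul, S.prod_map_average_apply_W Z hγ hLZ]
  by_cases hvK : ∀ z ∈ Z, z v = 0
  · exact smul_mem _ _ (smul_mem _ _ (subset_span ⟨v, hvK, rfl⟩))
  · have hkill : (2⁻¹ : ℂ) * (1 + exp (I * (ζ v v : ℝ))) = 0 := by
      rw [hζπ v (by simpa using hvK), mul_comm I, exp_pi_mul_I]
      ring
    have hζv : ζ v ∈ c.support.toList.map ζ := List.mem_map_of_mem (Finset.mem_toList.2 hv)
    rw [List.prod_eq_zero (List.mem_map.2 ⟨ζ v, hζv, hkill⟩), zero_smul, smul_zero]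
    exact zero_mem _

end WeylSystem

theorem weyl_fixed_point_subalgebra_general
    {V : Type} [AddCommGroup V] [Module ℝ V]
    (σ : V →ₗ[ℝ] V →ₗ[ℝ] ℝ)
    (S : WeylSystem V σ)
    (Z : Submodule ℝ (Module.Dual ℝ V))
    (γ : Module.Dual ℝ V → (S.Alg ≃⋆ₐ[ℂ] S.Alg))
    (hγ : ∀ z ∈ Z, ∀ v : V, γ z (S.W v) = Complex.exp (Complex.I * (z v : ℝ)) • S.W v) :
    {a : S.Alg | ∀ z ∈ Z, γ z a = a}
      = ((Algebra.adjoin ℂ (S.W '' {v : V | ∀ z ∈ Z, z v = 0})).topologicalClosure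
          : Set S.Alg) := by
  apply Set.Subset.antisymm
  · intro a ha
    have ha_span : a ∈ closure (span ℂ (Set.range S.W) : Set S.Alg) :=
      closure_mono S.adjoin_range_W_subset_span (by
        simpa [← Subalgebra.topologicalClosure_coe] using S.generates ▸ Algebra.mem_top (x := a))
    refine closure_mono (Algebra.span_le_adjoin ℂ _) <|
      mem_closure_of_forall_lipschitzWith_one_fixing ha_span fun b hb => ?_
    obtain ⟨L, hLZ, hLb⟩ := S.exists_prod_map_average_apply_mem_span Z hγ hb
    exact ⟨_, List.lipschitzWith_one_prod_map _ fun z _ => (γ z).lipschitzWith_one_average,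
      List.prod_map_apply_of_forall_eq_self _ fun z hz =>
        (γ z).average_apply_of_map_eq_self (ha z (hLZ z hz)), hLb⟩
  · intro a ha z hz
    refine (γ z).map_eq_self_of_mem_topologicalClosure_adjoin ?_ ha
    rintro _ ⟨v, hv, rfl⟩
    simp [hγ z hz, hv z hz]

/-- For a symplectic `(V,σ)` and a subspace `Z` of the
algebraic dual `V*`, given the action `γ` of `Z` on `Weyl(V,σ)` with
`γ(z)(W(v)) = e^{i z(v)} W(v)`, the fixed-point subalgebra equals the
C*-subalgebra generated by the Weyl generators labelled by `⋂_{z∈Z} ker z`. -/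
theorem weyl_fixed_point_subalgebra
    {V : Type} [AddCommGroup V] [Module ℝ V]
    (σ : V →ₗ[ℝ] V →ₗ[ℝ] ℝ)
    (hσ_alt : ∀ v, σ v v = 0)
    (hσ_nondeg : ∀ v, (∀ w, σ v w = 0) → v = 0)
    (S : WeylSystem V σ) [Nontrivial S.Alg]
    (Z : Submodule ℝ (Module.Dual ℝ V))
    (γ : Module.Dual ℝ V → (S.Alg ≃⋆ₐ[ℂ] S.Alg))
    (hγ : ∀ z ∈ Z, ∀ v : V, γ z (S.W v) = Complex.exp (Complex.I * (z v : ℝ)) • S.W v) :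
    {a : S.Alg | ∀ z ∈ Z, γ z a = a}
      = ((Algebra.adjoin ℂ (S.W '' {v : V | ∀ z ∈ Z, z v = 0})).topologicalClosure
          : Set S.Alg) :=
  weyl_fixed_point_subalgebra_general σ S Z γ hγ
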